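/- Cramer-type formula for the orthogonal complement: for linearly independent vectors h_1,…,h_r in a real inner product space and any vector u, the component of u orthogonal to L = span(h_1,…,h_r) equals the ratio of the formal (r+1)×(r+1) determinant with first row (u, h_1,…,h_r) and subsequent rows (⟨u,h_i⟩, ⟨h_1,h_i⟩,…,⟨h_r,h_i⟩) for i=1,…,r, expanded along the first row, divided by the Gram determinant det(⟨h_i,h_j⟩). -/

import Mathlib

/-!
Let `S = ∑ⱼ Cⱼ vⱼ` be the formal determinant, `Cⱼ` the cofactors of its first row and
`v = (u, h₁, …, hᵣ)`. Since the `(i+1)`-st row of the formal matrix is the row of inner products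
with `hᵢ`, `⟪S, hᵢ⟫` is the determinant of a matrix whose first row repeats that row, hence `0`;
so `S ⊥ L`. The cofactor of `u` is the Gram determinant, so `S = (det G) u + (element of L)`.
Dividing by `det G ≠ 0` exhibits `S / det G` as the component of `u` orthogonal to `L`.
-/

open RealInnerProductSpace

namespace Matrix

variable {R : Type*} [CommRing R] {r : ℕ}

/-- The cofactors of the first row of an `(r+1) × (r+1)` matrix whose last `r` rows are `A`. -/
def firstRowCofactor (A : Matrix (Fin r) (Fin (r + 1)) R) (j : Fin (r + 1)) : R :=
  (-1) ^ (j : ℕ) * (A.submatrix id j.succAbove).det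

theorem firstRowCofactor_zero (A : Matrix (Fin r) (Fin (r + 1)) R) :
    firstRowCofactor A 0 = (A.submatrix id Fin.succ).det := by
  simp [firstRowCofactor]

theorem sum_firstRowCofactor_mul_eq_det (A : Matrix (Fin r) (Fin (r + 1)) R)
    (b : Fin (r + 1) → R) :
    ∑ j, firstRowCofactor A j * b j = (of (Fin.cons b A : Fin (r + 1) → Fin (r + 1) → R)).det := by
  rw [det_succ_row_zero]
  refine Finset.sum_congr rfl fun j _ => ?_
  simp only [firstRowCofactor, of_apply]
  rw [mul_right_comm]
  rfl

theorem sum_firstRowCofactor_mul_row_eq_zero (A : Matrix (Fin r) (Fin (r + 1)) R) (i : Fin r) :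
    ∑ j, firstRowCofactor A j * A i j = 0 := by
  rw [sum_firstRowCofactor_mul_eq_det]
  exact det_zero_of_row_eq (Fin.succ_ne_zero i).symm rfl

end Matrix

open Matrix

section FormalDet

variable {R M : Type*} [CommRing R] [AddCommGroup M] [Module R M] {r : ℕ}

def formalDet (v : Fin (r + 1) → M) (A : Matrix (Fin r) (Fin (r + 1)) R) : M :=
  ∑ j, firstRowCofactor A j • v j

theorem formalDet_cons (u : M) (w : Fin r → M) (A : Matrix (Fin r) (Fin (r + 1)) R) :
    formalDet (Fin.cons u w) A =
      (A.submatrix id Fin.succ).det • u + ∑ k, firstRowCofactor A k.succ • w k := by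
  rw [formalDet, Fin.sum_univ_succ, firstRowCofactor_zero]
  rfl

end FormalDet

theorem mem_orthogonal_span_range_of_inner_eq_zero {𝕜 E ι : Type*} [RCLike 𝕜]
    [NormedAddCommGroup E] [InnerProductSpace 𝕜 E] {h : ι → E} {x : E}
    (hx : ∀ i, inner 𝕜 x (h i) = 0) : x ∈ (Submodule.span 𝕜 (Set.range h))ᗮ := by
  rw [← Submodule.span_singleton_le_iff_mem, ← Submodule.isOrtho_iff_le, Submodule.isOrtho_span]
  rintro _ rfl _ ⟨i, rfl⟩
  exact hx i

theorem inner_formalDet_eq_zero {V : Type*} [NormedAddCommGroup V] [InnerProductSpace ℝ V] {r : ℕ}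
    (v : Fin (r + 1) → V) (h : Fin r → V) (i : Fin r) :
    ⟪formalDet v (of fun i j => ⟪v j, h i⟫), h i⟫ = 0 := by
  rw [formalDet, sum_inner]
  simp only [real_inner_smul_left]
  exact sum_firstRowCofactor_mul_row_eq_zero (of fun i j => ⟪v j, h i⟫) i

/-- Cramer-type formula for the orthogonal complement: for linearly independent
`h_1,…,h_r` and any `u`, the component of `u` orthogonal to
`L = span(h_1,…,h_r)` equals the formal `(r+1)×(r+1)` determinant with first
row `(u, h_1, …, h_r)` and rows `(⟪u,h_i⟫, ⟪h_1,h_i⟫, …, ⟪h_r,h_i⟫)`,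
expanded along the first row (an alternating sum of numeric cofactors times the
first-row vectors), divided by the Gram determinant `det ⟪h_i, h_j⟫`. -/
theorem stmt16 {V : Type*} [NormedAddCommGroup V] [InnerProductSpace ℝ V]
    [FiniteDimensional ℝ V] {r : ℕ} (h : Fin r → V)
    (hli : LinearIndependent ℝ h) (u : V) :
    let L := Submodule.span ℝ (Set.range h)
    let v : Fin (r + 1) → V := Fin.cons u h
    let A : Matrix (Fin r) (Fin (r + 1)) ℝ := Matrix.of fun i j => ⟪v j, h i⟫
    let G : Matrix (Fin r) (Fin r) ℝ := Matrix.of fun i j => ⟪h i, h j⟫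
    u - (Submodule.orthogonalProjectionOnto L u : V) =
      (G.det)⁻¹ •
        ∑ j : Fin (r + 1),
          ((-1 : ℝ) ^ (j : ℕ) * (A.submatrix id j.succAbove).det) • v j := by
  intro L v A G
  change _ = G.det⁻¹ • formalDet v A
  have hG : G.det ≠ 0 := det_gram_ne_zero_iff_linearIndependent.2 hli
  have hminor : A.submatrix id Fin.succ = Gᵀ := rfl
  have horth : G.det⁻¹ • formalDet v A ∈ Lᗮ :=
    Submodule.smul_mem _ _ (mem_orthogonal_span_range_of_inner_eq_zero (inner_formalDet_eq_zero v h))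
  have hrest : u - G.det⁻¹ • formalDet v A ∈ L := by
    rw [formalDet_cons, hminor, det_transpose, smul_add, smul_smul, inv_mul_cancel₀ hG, one_smul,
      sub_add_cancel_left]
    exact L.neg_mem <| L.smul_mem _ <| L.sum_mem fun k _ =>
      L.smul_mem _ (Submodule.subset_span ⟨k, rfl⟩)
  rw [Submodule.coe_orthogonalProjectionOnto_apply,
    Submodule.eq_starProjection_of_mem_orthogonal hrest (by rwa [sub_sub_cancel]), sub_sub_cancel]
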